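/- Let $m_1, m_2 > 2$ be integers and $m = m_1 + m_2$. With $g$ and $h$ defined by $g(x) = \frac{(m_1-2)^2 - 2m_1^2}{2m^2 x^2} + \frac{m_1}{m x} + \frac{(m_1-2)\sqrt{(2mx - m_1)^2 - 4(m_1-1)}}{2m^2 x^2} + \frac{1}{m^2}\left(m - \frac{m_1}{x}\right)^2$ and $h(y) = \frac{(m_2-2)^2 - 2m_2^2}{2m^2 y^2} + \frac{m_2}{m y} + \frac{(m_2-2)\sqrt{(2my - m_2)^2 - 4(m_2-1)}}{2m^2 y^2} + \frac{1}{m^2}\left(m - \frac{m_2}{y}\right)^2$, for every $x \in \left[\frac{m_1 + 2\sqrt{m_1-1}}{2m}, \frac{2m_1 + m_2 - 2\sqrt{m_2-1}}{2m}\right]$ one has $\min\{g(x), h(1-x)\} \le \frac{(m-4)^2}{m^2}$. -/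

import Mathlib

/-- The upper-bound function for the squared mean curvature of the product,
coming from the factor `M₁^{m₁}` (the function `h` is `gBound m2 m1`). -/
noncomputable def gBound (m1 m2 : ℕ) (x : ℝ) : ℝ :=
  (((m1 : ℝ) - 2) ^ 2 - 2 * (m1 : ℝ) ^ 2) / (2 * ((m1 : ℝ) + m2) ^ 2 * x ^ 2) +
    (m1 : ℝ) / (((m1 : ℝ) + m2) * x) +
    ((m1 : ℝ) - 2) *
      Real.sqrt ((2 * ((m1 : ℝ) + m2) * x - (m1 : ℝ)) ^ 2 - 4 * ((m1 : ℝ) - 1)) /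
      (2 * ((m1 : ℝ) + m2) ^ 2 * x ^ 2) +
    (1 / ((m1 : ℝ) + m2) ^ 2) * (((m1 : ℝ) + m2) - (m1 : ℝ) / x) ^ 2

/-!
Write `a = m₁`, `b = m₂`, `m = a + b` and `S(x) = √((2mx - a)² - 4(a - 1))`. Clearing the
denominator `2m²x²`, the bound `g(x) ≤ (m-4)²/m²` becomes `(a - 2) S(x) ≤ R(x)` for the concave
quadratic `R(x) = gapQuadratic a b x = 2amx - (a-2)² - 16(m-2)x²`. This holds on `[x₀, x*]`, where
`x₀ = (a + 2√(a-1))/(2m)` is the left end of the interval and `x* = (3a + b - 4)/(4(m-2))`: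
`R` is nonnegative at both ends, hence on the whole segment, and up to the factor `4x²/m²` the
difference `R² - (a-2)²S²` is a difference of squares `P² - Q²` with `P - Q ≥ 0` exactly when
`x ≤ x*`. Exchanging `m₁` and `m₂` maps `x ↦ 1 - x`, the interval to itself and `x*` to the
corresponding point for `h`, so `h(1 - x)` is bounded in the same way on the rest of the interval.
-/

def gapQuadratic (a b x : ℝ) : ℝ :=
  2 * a * (a + b) * x - (a - 2) ^ 2 - 16 * (a + b - 2) * x ^ 2

lemma nonneg_of_concave_quadratic {c β γ x₀ x₁ x : ℝ} (hc : 0 ≤ c)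
    (h₀ : 0 ≤ β * x₀ + γ - c * x₀ ^ 2) (h₁ : 0 ≤ β * x₁ + γ - c * x₁ ^ 2)
    (hx₀ : x₀ ≤ x) (hx₁ : x ≤ x₁) :
    0 ≤ β * x + γ - c * x ^ 2 := by
  rcases hx₀.eq_or_lt with rfl | hlt
  · exact h₀
  have key : (x₁ - x₀) * (β * x + γ - c * x ^ 2) =
      (x₁ - x) * (β * x₀ + γ - c * x₀ ^ 2) + (x - x₀) * (β * x₁ + γ - c * x₁ ^ 2) +
        c * (x₁ - x₀) * (x - x₀) * (x₁ - x) := by ring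
  refine nonneg_of_mul_nonneg_right ?_ (sub_pos.2 (hlt.trans_le hx₁))
  rw [key]
  have hx₀' := sub_nonneg.2 hx₀
  have hx₁' := sub_nonneg.2 hx₁
  have hx₀₁ := sub_nonneg.2 (hx₀.trans hx₁)
  positivity

namespace gapQuadratic

variable {a b : ℝ}

lemma nonneg_left (ha : 2 ≤ a) (hb : 2 ≤ b) :
    0 ≤ gapQuadratic a b ((a + 2 * √(a - 1)) / (2 * (a + b))) := by
  set s := √(a - 1) with hs
  have hs1 : 1 ≤ s := by rw [hs, Real.one_le_sqrt]; linarith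
  have ha' : a = s ^ 2 + 1 := by rw [hs, Real.sq_sqrt (by linarith)]; ring
  have hm : a + b ≠ 0 := by linarith
  have key : (a + b) ^ 2 * gapQuadratic a b ((a + 2 * s) / (2 * (a + b))) =
      2 * (s + 1) ^ 2 * ((a + b - 2) - 2 * s) * (s * (a + b - 2) - 2) := by
    unfold gapQuadratic
    field_simp
    rw [ha']
    ring
  have h₁ : 0 ≤ (a + b - 2) - 2 * s := by nlinarith [sq_nonneg (s - 1)]
  have h₂ : 0 ≤ s * (a + b - 2) - 2 := by nlinarith
  have h := mul_nonneg (mul_nonneg (by positivity : 0 ≤ 2 * (s + 1) ^ 2) h₁) h₂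
  rw [← key] at h
  exact nonneg_of_mul_nonneg_right h (by positivity)

lemma nonneg_right (ha : 2 ≤ a) (hb : 2 ≤ b) :
    0 ≤ gapQuadratic a b ((3 * a + b - 4) / (4 * (a + b - 2))) := by
  have hm : a + b - 2 ≠ 0 := by linarith
  have key : 2 * (a + b - 2) * gapQuadratic a b ((3 * a + b - 4) / (4 * (a + b - 2))) =
      (a - 2) * ((a + b - 4) ^ 2 + 4 * (b - 2)) := by
    unfold gapQuadratic
    field_simp
    ring
  have h := mul_nonneg (by linarith : 0 ≤ a - 2)
    (add_nonneg (sq_nonneg (a + b - 4)) (by linarith : 0 ≤ 4 * (b - 2)))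
  rw [← key] at h
  exact nonneg_of_mul_nonneg_right h (by linarith)

lemma nonneg {x : ℝ} (ha : 2 ≤ a) (hb : 2 ≤ b)
    (hx₀ : (a + 2 * √(a - 1)) / (2 * (a + b)) ≤ x)
    (hx₁ : x ≤ (3 * a + b - 4) / (4 * (a + b - 2))) :
    0 ≤ gapQuadratic a b x := by
  have h := nonneg_of_concave_quadratic (β := 2 * a * (a + b)) (γ := -(a - 2) ^ 2)
    (c := 16 * (a + b - 2)) (by linarith) ?_ ?_ hx₀ hx₁
  · unfold gapQuadratic; linarith
  · have := nonneg_left ha hb; unfold gapQuadratic at this; linarith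
  · have := nonneg_right ha hb; unfold gapQuadratic at this; linarith

lemma sq_mul_discr_le_sq {x : ℝ} (ha : 2 ≤ a) (hm : 4 ≤ a + b)
    (hx : x ≤ (3 * a + b - 4) / (4 * (a + b - 2))) :
    (a - 2) ^ 2 * ((2 * (a + b) * x - a) ^ 2 - 4 * (a - 1)) ≤ gapQuadratic a b x ^ 2 := by
  set P := a * (a + b) ^ 2 - 8 * (a + b - 2) * (a + b) * x
  set Q := (a - 2) * (a + b - 4) * (a + b)
  have key : (a + b) ^ 2 *
      (gapQuadratic a b x ^ 2 - (a - 2) ^ 2 * ((2 * (a + b) * x - a) ^ 2 - 4 * (a - 1))) =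
      (2 * x) ^ 2 * ((P - Q) * (P + Q)) := by
    unfold gapQuadratic; ring
  have hPQ : P - Q = 2 * (a + b) * ((3 * a + b - 4) - 4 * (a + b - 2) * x) := by ring
  have hx' : 0 ≤ (3 * a + b - 4) - 4 * (a + b - 2) * x := by
    rw [le_div_iff₀ (by linarith)] at hx; linarith
  have hQ : 0 ≤ Q := mul_nonneg (mul_nonneg (by linarith) (by linarith)) (by linarith)
  have hP : 0 ≤ P - Q := hPQ ▸ mul_nonneg (by linarith) hx'
  have h := mul_nonneg (sq_nonneg (2 * x)) (mul_nonneg hP (by linarith : 0 ≤ P + Q))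
  rw [← key] at h
  exact sub_nonneg.1 (nonneg_of_mul_nonneg_right h (by positivity))

end gapQuadratic

lemma gBound_eq_sub (m1 m2 : ℕ) {x : ℝ} (hm : (m1 : ℝ) + m2 ≠ 0) (hx : x ≠ 0) :
    gBound m1 m2 x = (((m1 : ℝ) + m2) - 4) ^ 2 / ((m1 : ℝ) + m2) ^ 2 -
      (gapQuadratic m1 m2 x -
        ((m1 : ℝ) - 2) * √((2 * ((m1 : ℝ) + m2) * x - m1) ^ 2 - 4 * ((m1 : ℝ) - 1))) /
        (2 * ((m1 : ℝ) + m2) ^ 2 * x ^ 2) := by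
  unfold gBound gapQuadratic
  field_simp
  ring

lemma gBound_le (m1 m2 : ℕ) (hm1 : (2 : ℝ) ≤ m1) (hm2 : (2 : ℝ) ≤ m2) {x : ℝ}
    (hx₀ : ((m1 : ℝ) + 2 * √((m1 : ℝ) - 1)) / (2 * ((m1 : ℝ) + m2)) ≤ x)
    (hx₁ : x ≤ (3 * (m1 : ℝ) + m2 - 4) / (4 * ((m1 : ℝ) + m2 - 2))) :
    gBound m1 m2 x ≤ (((m1 : ℝ) + m2) - 4) ^ 2 / ((m1 : ℝ) + m2) ^ 2 := by
  have hx : 0 < x := lt_of_lt_of_le (by positivity) hx₀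
  have hR := gapQuadratic.nonneg hm1 hm2 hx₀ hx₁
  have hsq := gapQuadratic.sq_mul_discr_le_sq hm1 (by linarith) hx₁
  have hS : ((m1 : ℝ) - 2) * √((2 * ((m1 : ℝ) + m2) * x - m1) ^ 2 - 4 * ((m1 : ℝ) - 1)) ≤
      gapQuadratic m1 m2 x := by
    have hD : 0 ≤ (2 * ((m1 : ℝ) + m2) * x - m1) ^ 2 - 4 * ((m1 : ℝ) - 1) := by
      have h : 2 * √((m1 : ℝ) - 1) ≤ 2 * ((m1 : ℝ) + m2) * x - m1 := by
        rw [div_le_iff₀ (by positivity)] at hx₀; linarith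
      nlinarith [Real.sq_sqrt (show (0 : ℝ) ≤ m1 - 1 by linarith), Real.sqrt_nonneg ((m1 : ℝ) - 1)]
    refine (le_abs_self _).trans (abs_le_of_sq_le_sq ?_ hR)
    rwa [mul_pow, Real.sq_sqrt hD]
  rw [gBound_eq_sub m1 m2 (by positivity) hx.ne']
  exact sub_le_self _ (div_nonneg (sub_nonneg.2 hS) (by positivity))

/-- Analytic core of the main gap theorem: on the admissible interval,
`min{g(x), h(1-x)} ≤ (m-4)²/m²`. -/
theorem min_gBound_le (m1 m2 : ℕ) (hm1 : 2 < m1) (hm2 : 2 < m2) :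
    ∀ x : ℝ,
      x ∈ Set.Icc (((m1 : ℝ) + 2 * Real.sqrt ((m1 : ℝ) - 1)) / (2 * ((m1 : ℝ) + m2)))
        ((2 * (m1 : ℝ) + m2 - 2 * Real.sqrt ((m2 : ℝ) - 1)) / (2 * ((m1 : ℝ) + m2))) →
      min (gBound m1 m2 x) (gBound m2 m1 (1 - x)) ≤
        (((m1 : ℝ) + m2) - 4) ^ 2 / ((m1 : ℝ) + m2) ^ 2 := by
  rintro x ⟨hx₀, hx₁⟩
  have ha : (2 : ℝ) ≤ m1 := by exact_mod_cast hm1.le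
  have hb : (2 : ℝ) ≤ m2 := by exact_mod_cast hm2.le
  rcases le_or_gt x ((3 * (m1 : ℝ) + m2 - 4) / (4 * ((m1 : ℝ) + m2 - 2))) with hx | hx
  · exact (min_le_left _ _).trans (gBound_le m1 m2 ha hb hx₀ hx)
  refine (min_le_right _ _).trans ?_
  rw [add_comm (m1 : ℝ)]
  refine gBound_le m2 m1 hb ha ?_ ?_
  · rw [le_div_iff₀ (by positivity)] at hx₁
    rw [div_le_iff₀ (by positivity)]
    linarith
  · rw [div_lt_iff₀ (by linarith)] at hx
    rw [le_div_iff₀ (by linarith)]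
    linarith
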